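/- arXiv:2104.14176 — 2 statements merged into one kernel-verified Lean document; each statement's English description precedes it below -/
import Mathlib

section
/- For every real g ∈ (0, 1/4): the series ∑_{m=0}^∞ W_m(g) is summable with sum equal to W(g), and consequently for every real k ∈ (0, 1] the series ∑_{m=0}^∞ k^m·W_m(g) is summable. In other words, the critical coupling g_c(k) of the height-coupled tree partition function equals 1/4 for all k ∈ (0,1]. -/
/-!
`W(g)` is the fixed point `w` of `x ↦ 1/(1 - g x)` with `1 ≤ w`, and the partial sums of
`∑ W_m` telescope to `X_m`. Since `1/X_{m+1} - 1/w = g (w - X_m)`, the iterates stay in `[1, w]`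
and the gap `w - X_m` shrinks by the factor `g w² = w - 1`, which is `< 1` exactly when `g < 1/4`.
-/

/-- The sequence `X_m(g)` defined by `X_0 = 1`, `X_{m+1} = 1/(1 - g X_m)`. -/
noncomputable def Xseq (g : ℝ) : ℕ → ℝ
  | 0 => 1
  | m + 1 => 1 / (1 - g * Xseq g m)

/-- The fixed-height partition functions `W_0(g) = 1`, `W_m(g) = X_m(g) - X_{m-1}(g)` for `m ≥ 1`. -/
noncomputable def Wseq (g : ℝ) : ℕ → ℝ
  | 0 => 1
  | m + 1 => Xseq g (m + 1) - Xseq g m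

/-- The tree partition function `W(g) = (1 - √(1-4g))/(2g)`. -/
noncomputable def Wfun (g : ℝ) : ℝ := (1 - Real.sqrt (1 - 4 * g)) / (2 * g)

open Filter Topology Finset

theorem sum_range_succ_Wseq (g : ℝ) (n : ℕ) : ∑ i ∈ range (n + 1), Wseq g i = Xseq g n := by
  induction n with
  | zero => simp [Wseq, Xseq]
  | succ n ih => rw [sum_range_succ, ih, Wseq]; ring

section FixedPoint

variable {g w : ℝ}

theorem one_le_of_mul_one_sub_eq_one (hg : 0 ≤ g) (hw : w * (1 - g * w) = 1) : 1 ≤ w := by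
  nlinarith [mul_nonneg hg (sq_nonneg w)]

theorem one_sub_mul_pos_of_mul_one_sub_eq_one (hg : 0 ≤ g) (hw : w * (1 - g * w) = 1) :
    0 < 1 - g * w := by
  have := one_le_of_mul_one_sub_eq_one hg hw
  nlinarith

theorem Xseq_mem_Icc (hg : 0 ≤ g) (hw : w * (1 - g * w) = 1) (m : ℕ) :
    Xseq g m ∈ Set.Icc 1 w := by
  have hw1 := one_le_of_mul_one_sub_eq_one hg hw
  have hgw := one_sub_mul_pos_of_mul_one_sub_eq_one hg hw
  induction m with
  | zero => exact ⟨le_rfl, hw1⟩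
  | succ m ih =>
    have hden : 1 - g * w ≤ 1 - g * Xseq g m := by nlinarith [ih.2]
    have hden' : 1 - g * Xseq g m ≤ 1 := by nlinarith [ih.1]
    refine ⟨?_, ?_⟩ <;> rw [Xseq]
    · exact one_le_one_div (hgw.trans_le hden) hden'
    · calc 1 / (1 - g * Xseq g m) ≤ 1 / (1 - g * w) := one_div_le_one_div_of_le hgw hden
        _ = w := (eq_one_div_of_mul_eq_one_left hw).symm

theorem one_sub_mul_Xseq_pos (hg : 0 ≤ g) (hw : w * (1 - g * w) = 1) (m : ℕ) :
    0 < 1 - g * Xseq g m := by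
  have := one_sub_mul_pos_of_mul_one_sub_eq_one hg hw
  nlinarith [(Xseq_mem_Icc hg hw m).2]

theorem Xseq_monotone (hg : 0 ≤ g) (hw : w * (1 - g * w) = 1) : Monotone (Xseq g) := by
  refine monotone_nat_of_le_succ fun m => ?_
  induction m with
  | zero => exact (Xseq_mem_Icc hg hw 1).1
  | succ m ih =>
    show 1 / (1 - g * Xseq g m) ≤ 1 / (1 - g * Xseq g (m + 1))
    exact one_div_le_one_div_of_le (one_sub_mul_Xseq_pos hg hw (m + 1))
      (by nlinarith)

theorem Wseq_nonneg (hg : 0 ≤ g) (hw : w * (1 - g * w) = 1) (m : ℕ) : 0 ≤ Wseq g m := by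
  cases m with
  | zero => exact zero_le_one
  | succ m => exact sub_nonneg.2 (Xseq_monotone hg hw m.le_succ)

theorem sub_Xseq_succ (hg : 0 ≤ g) (hw : w * (1 - g * w) = 1) (m : ℕ) :
    w - Xseq g (m + 1) = g * w * Xseq g (m + 1) * (w - Xseq g m) := by
  have hden := (one_sub_mul_Xseq_pos hg hw m).ne'
  rw [Xseq]
  field_simp
  linear_combination hw

theorem sub_Xseq_le (hg : 0 ≤ g) (hw : w * (1 - g * w) = 1) (m : ℕ) :
    w - Xseq g m ≤ (g * w ^ 2) ^ m * (w - 1) := by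
  induction m with
  | zero => simp [Xseq]
  | succ m ih =>
    have hXw : Xseq g (m + 1) ≤ w := (Xseq_mem_Icc hg hw (m + 1)).2
    have hgap : 0 ≤ w - Xseq g m := sub_nonneg.2 (Xseq_mem_Icc hg hw m).2
    have hw0 : 0 ≤ w := zero_le_one.trans (one_le_of_mul_one_sub_eq_one hg hw)
    have hgw : 0 ≤ g * w := mul_nonneg hg hw0
    have hgww : 0 ≤ g * w * w := mul_nonneg hgw hw0
    calc w - Xseq g (m + 1) = g * w * Xseq g (m + 1) * (w - Xseq g m) := sub_Xseq_succ hg hw m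
      _ ≤ g * w * w * (w - Xseq g m) := by gcongr
      _ ≤ g * w * w * ((g * w ^ 2) ^ m * (w - 1)) := by gcongr
      _ = (g * w ^ 2) ^ (m + 1) * (w - 1) := by ring

theorem tendsto_Xseq (hg : 0 ≤ g) (hw : w * (1 - g * w) = 1) (hcontr : g * w ^ 2 < 1) :
    Tendsto (Xseq g) atTop (𝓝 w) := by
  have hgeom : Tendsto (fun m : ℕ => w - (g * w ^ 2) ^ m * (w - 1)) atTop (𝓝 w) := by
    simpa using tendsto_const_nhds.sub
      ((tendsto_pow_atTop_nhds_zero_of_lt_one (by positivity) hcontr).mul_const (w - 1))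
  refine tendsto_of_tendsto_of_tendsto_of_le_of_le hgeom tendsto_const_nhds (fun m => ?_)
    (fun m => (Xseq_mem_Icc hg hw m).2)
  linarith [sub_Xseq_le hg hw m]

theorem hasSum_Wseq (hg : 0 ≤ g) (hw : w * (1 - g * w) = 1) (hcontr : g * w ^ 2 < 1) :
    HasSum (Wseq g) w := by
  rw [hasSum_iff_tendsto_nat_of_nonneg (Wseq_nonneg hg hw), ← tendsto_add_atTop_iff_nat 1]
  simpa only [sum_range_succ_Wseq] using tendsto_Xseq hg hw hcontr

end FixedPoint

section Wfun

variable {g : ℝ}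

theorem Wfun_mul_one_sub (hg0 : 0 < g) (hg1 : g ≤ 1 / 4) : Wfun g * (1 - g * Wfun g) = 1 := by
  have hs := Real.sq_sqrt (show 0 ≤ 1 - 4 * g by linarith)
  rw [Wfun]
  field_simp
  linear_combination -hs

theorem mul_Wfun_sq_lt_one (hg0 : 0 < g) (hg1 : g < 1 / 4) : g * Wfun g ^ 2 < 1 := by
  have hs0 : 0 < Real.sqrt (1 - 4 * g) := Real.sqrt_pos.2 (by linarith)
  have hs := Real.sq_sqrt (show 0 ≤ 1 - 4 * g by linarith)
  -- `g w² = w - 1`, and `w < 2` because `s := √(1 - 4g)` satisfies `1 - 4g = s² < s`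
  have hw : g * Wfun g ^ 2 = Wfun g - 1 := by
    linear_combination -(Wfun_mul_one_sub hg0 hg1.le)
  rw [hw, Wfun, sub_lt_iff_lt_add, div_lt_iff₀ (by positivity)]
  nlinarith

end Wfun

/-- For `g ∈ (0,1/4)`, `∑ W_m(g)` is summable with sum `W(g)`, and for every
`k ∈ (0,1]` the series `∑ k^m W_m(g)` is summable; i.e. `g_c(k) = 1/4` for `k ∈ (0,1]`. -/
theorem stmt_8 (g : ℝ) (hg0 : 0 < g) (hg1 : g < 1/4) :
    HasSum (fun m : ℕ => Wseq g m) (Wfun g) ∧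
    ∀ k : ℝ, 0 < k → k ≤ 1 → Summable (fun m : ℕ => k ^ m * Wseq g m) := by
  have hfix := Wfun_mul_one_sub hg0 hg1.le
  have hWnonneg := Wseq_nonneg hg0.le hfix
  have hsum : HasSum (Wseq g) (Wfun g) := hasSum_Wseq hg0.le hfix (mul_Wfun_sq_lt_one hg0 hg1)
  refine ⟨hsum, fun k hk0 hk1 => hsum.summable.of_nonneg_of_le
    (fun m => mul_nonneg (pow_nonneg hk0.le m) (hWnonneg m)) (fun m => ?_)⟩
  exact mul_le_of_le_one_left (hWnonneg m) (pow_le_one₀ hk0.le hk1)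
end

section
/- For every real g ∈ (0, 1/4) and every integer m ≥ 1, the inequality W_m(g) ≤ ∑_{(l₁,…,l_m)} ∏_{k=1}^m T_{l_k, l_{k+1}}(g) holds, where the sum runs over all m-tuples (l₁,…,l_m) of positive integers with the cyclic convention l_{m+1} := l₁, T_{r,s}(g) := C(r+s−1, r)·(√g)^{r+s}, and the possibly infinite sum on the right is taken in the extended nonnegative reals [0, ∞]. -/
/-- Pure CDT transfer matrix elements `T_{r,s}(g) = C(r+s-1, r)·(√g)^{r+s}` for `r, s ≥ 1`. -/
noncomputable def Tmat (g : ℝ) (r s : ℕ+) : ℝ :=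
  (Nat.choose ((r : ℕ) + (s : ℕ) - 1) (r : ℕ) : ℝ) * Real.sqrt g ^ ((r : ℕ) + (s : ℕ))

open scoped ENNReal

/-!
Writing `y_n = √g X_n`, the transfer matrix maps the vector `s ↦ y_n ^ s` to
`g X_n X_{n+1}` times the vector `r ↦ y_{n+1} ^ r`: this is the negative binomial series
`∑ⱼ C(r+j, j) xʲ = (1 - x)^{-(r+1)}` at `x = g X_n`, combined with `X_{n+1} = 1/(1 - g X_n)`.
Bounding the closing factor `T_{l_m, l_1}` of a cycle below by `(√g)^{l_m} (√g)^{l_1}` turns the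
cyclic sum into a sum over paths from the vector `y_0 ^ ·` to itself, which the eigenrelation
evaluates to `∏_{j<m} g X_j X_{j+1} = W_m`.
-/

section Kernel

variable {α : Type*} (K : α → α → ℝ≥0∞)

noncomputable def kernelPow : ℕ → (α → ℝ≥0∞) → α → ℝ≥0∞
  | 0, v => v
  | n + 1, v => fun a => ∑' b, K a b * kernelPow n v b

theorem tsum_path_eq_tsum_kernelPow (n : ℕ) (u v : α → ℝ≥0∞) :
    ∑' l : Fin (n + 1) → α,
        u (l 0) * (∏ k : Fin n, K (l k.castSucc) (l k.succ)) * v (l (Fin.last n)) =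
      ∑' a, u a * kernelPow K n v a := by
  induction n generalizing u with
  | zero =>
    rw [← (Equiv.funUnique (Fin 1) α).symm.tsum_eq]
    simp [kernelPow]
  | succ n ih =>
    rw [← (Fin.consEquiv fun _ => α).tsum_eq, ENNReal.tsum_prod']
    refine tsum_congr fun a => ?_
    simp only [kernelPow, ← ENNReal.tsum_mul_left, ← mul_assoc, ← ih]
    refine tsum_congr fun l => ?_
    simp [Fin.prod_univ_succ, Fin.consEquiv, mul_assoc]

theorem tsum_path_le_tsum_cycle (n : ℕ) {u v : α → ℝ≥0∞}
    (h : ∀ a b, v a * u b ≤ K a b) :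
    ∑' l : Fin (n + 1) → α,
        u (l 0) * (∏ k : Fin n, K (l k.castSucc) (l k.succ)) * v (l (Fin.last n)) ≤
      ∑' l : Fin (n + 1) → α, ∏ k, K (l k) (l (finRotate (n + 1) k)) := by
  refine ENNReal.tsum_le_tsum fun l => ?_
  rw [Fin.prod_univ_castSucc, finRotate_last, mul_comm (u _), mul_assoc, mul_comm (u _)]
  gcongr with k
  · rw [finRotate_apply, Fin.coeSucc_eq_succ]
  · exact h _ _

end Kernel

theorem tsum_ofReal_of_hasSum {ι : Type*} {f : ι → ℝ} {a : ℝ} (hf : ∀ i, 0 ≤ f i)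
    (h : HasSum f a) : ∑' i, ENNReal.ofReal (f i) = ENNReal.ofReal a := by
  rw [← ENNReal.ofReal_tsum_of_nonneg hf h.summable, h.tsum_eq]

noncomputable def transferKernel (g : ℝ) (r s : ℕ+) : ℝ≥0∞ := ENNReal.ofReal (Tmat g r s)

theorem ofReal_sqrt_pow_mul_le_transferKernel (g : ℝ) (r s : ℕ+) :
    ENNReal.ofReal (√g ^ (r : ℕ)) * ENNReal.ofReal (√g ^ (s : ℕ)) ≤
      transferKernel g r s := by
  rw [transferKernel, ← ENNReal.ofReal_mul (by positivity), ← pow_add]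
  refine ENNReal.ofReal_le_ofReal (le_mul_of_one_le_left (by positivity) ?_)
  exact Nat.one_le_cast.2 (Nat.choose_pos (by have := s.pos; omega))

section Transfer

variable {g : ℝ}

theorem Xseq_pos_and_lt_two (hg0 : 0 < g) (hg1 : g < 1 / 4) (n : ℕ) :
    0 < Xseq g n ∧ Xseq g n < 2 := by
  induction n with
  | zero => norm_num [Xseq]
  | succ n ih =>
    have hgX : g * Xseq g n < 1 / 2 := by nlinarith
    simp only [Xseq]
    constructor
    · exact div_pos one_pos (by linarith)
    · rw [div_lt_iff₀ (by linarith)]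
      linarith

theorem Xseq_pos (hg0 : 0 < g) (hg1 : g < 1 / 4) (n : ℕ) : 0 < Xseq g n :=
  (Xseq_pos_and_lt_two hg0 hg1 n).1

theorem mul_Xseq_lt_one (hg0 : 0 < g) (hg1 : g < 1 / 4) (n : ℕ) : g * Xseq g n < 1 := by
  nlinarith [Xseq_pos_and_lt_two hg0 hg1 n]

theorem Xseq_succ_mul (hg0 : 0 < g) (hg1 : g < 1 / 4) (n : ℕ) :
    Xseq g (n + 1) * (1 - g * Xseq g n) = 1 :=
  one_div_mul_cancel (sub_ne_zero.2 (mul_Xseq_lt_one hg0 hg1 n).ne')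

theorem Wseq_succ (hg0 : 0 < g) (hg1 : g < 1 / 4) (n : ℕ) :
    Wseq g (n + 1) = Wseq g n * (g * Xseq g n * Xseq g (n + 1)) := by
  have h₀ := Xseq_succ_mul hg0 hg1 n
  cases n with
  | zero =>
    simp only [Wseq, Xseq] at h₀ ⊢
    linear_combination h₀
  | succ n =>
    have h₁ := Xseq_succ_mul hg0 hg1 n
    simp only [Wseq]
    linear_combination Xseq g (n + 1) * h₀ - Xseq g (n + 2) * h₁

theorem Wseq_pos (hg0 : 0 < g) (hg1 : g < 1 / 4) (n : ℕ) : 0 < Wseq g n := by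
  induction n with
  | zero => exact one_pos
  | succ n ih =>
    rw [Wseq_succ hg0 hg1]
    exact mul_pos ih (mul_pos (mul_pos hg0 (Xseq_pos hg0 hg1 n)) (Xseq_pos hg0 hg1 (n + 1)))

theorem hasSum_transfer (hg0 : 0 < g) (hg1 : g < 1 / 4) (n r : ℕ) :
    HasSum (fun s : ℕ+ =>
        ((r + s - 1).choose r : ℝ) * √g ^ (r + s) * (√g * Xseq g n) ^ (s : ℕ))
      (g * Xseq g n * Xseq g (n + 1) * (√g * Xseq g (n + 1)) ^ r) := by
  set y := √g * Xseq g n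
  have hy : √g * y = g * Xseq g n := by rw [← mul_assoc, Real.mul_self_sqrt hg0.le]
  have hnorm : ‖√g * y‖ < 1 := by
    rw [hy, Real.norm_of_nonneg (mul_pos hg0 (Xseq_pos hg0 hg1 n)).le]
    exact mul_Xseq_lt_one hg0 hg1 n
  have h := (hasSum_choose_mul_geometric_of_norm_lt_one r hnorm).mul_left (√g ^ (r + 1) * y)
  refine (hasSum_pnat_iff_hasSum_succ
    (f := fun s : ℕ => ((r + s - 1).choose r : ℝ) * √g ^ (r + s) * y ^ s)).2 ?_
  have hval : g * Xseq g n * Xseq g (n + 1) * (√g * Xseq g (n + 1)) ^ r =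
      √g ^ (r + 1) * y * (1 / (1 - √g * y) ^ (r + 1)) := by
    rw [show √g ^ (r + 1) * y = √g ^ r * (√g * y) by ring, hy, Xseq]
    generalize 1 - g * Xseq g n = D
    ring
  rw [hval]
  refine h.congr_fun fun j => ?_
  rw [show r + (j + 1) - 1 = j + r by omega]
  ring

theorem tsum_transfer (hg0 : 0 < g) (hg1 : g < 1 / 4) (n r : ℕ) :
    ∑' s : ℕ+, ENNReal.ofReal (((r + s - 1).choose r : ℝ) * √g ^ (r + s)) *
        ENNReal.ofReal (Wseq g n * (√g * Xseq g n) ^ (s : ℕ)) =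
      ENNReal.ofReal (Wseq g (n + 1) * (√g * Xseq g (n + 1)) ^ r) := by
  have hy : 0 ≤ √g * Xseq g n := mul_nonneg (Real.sqrt_nonneg g) (Xseq_pos hg0 hg1 n).le
  have hW : 0 ≤ Wseq g n := (Wseq_pos hg0 hg1 n).le
  calc _ = ∑' s : ℕ+, ENNReal.ofReal (Wseq g n *
          (((r + s - 1).choose r : ℝ) * √g ^ (r + s) * (√g * Xseq g n) ^ (s : ℕ))) := by
        refine tsum_congr fun s => ?_
        rw [← ENNReal.ofReal_mul (by positivity)]
        ring_nf
    _ = _ := by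
        rw [tsum_ofReal_of_hasSum (fun s => by positivity)
          ((hasSum_transfer hg0 hg1 n r).mul_left (Wseq g n)), Wseq_succ hg0 hg1]
        ring_nf

theorem kernelPow_transferKernel (hg0 : 0 < g) (hg1 : g < 1 / 4) (n : ℕ) (r : ℕ+) :
    kernelPow (transferKernel g) n (fun s => ENNReal.ofReal (√g ^ (s : ℕ))) r =
      ENNReal.ofReal (Wseq g n * (√g * Xseq g n) ^ (r : ℕ)) := by
  induction n generalizing r with
  | zero => simp [kernelPow, Wseq, Xseq]
  | succ n ih =>
    simp only [kernelPow, ih]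
    exact tsum_transfer hg0 hg1 n r

theorem tsum_sqrt_pow_mul_kernelPow_transferKernel (hg0 : 0 < g) (hg1 : g < 1 / 4) (n : ℕ) :
    ∑' a : ℕ+, ENNReal.ofReal (√g ^ (a : ℕ)) *
        kernelPow (transferKernel g) n (fun s => ENNReal.ofReal (√g ^ (s : ℕ))) a =
      ENNReal.ofReal (Wseq g (n + 1)) := by
  simp only [kernelPow_transferKernel hg0 hg1]
  simpa using tsum_transfer hg0 hg1 n 0

end Transfer

/-- For `g ∈ (0,1/4)` and `m ≥ 1`,
`W_m(g) ≤ ∑_{(l₁,…,l_m)} ∏_{k=1}^m T_{l_k, l_{k+1}}(g)` (cyclically, `l_{m+1} = l₁`),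
the right-hand side being a possibly infinite sum in `[0,∞]`. -/
theorem stmt_17 (g : ℝ) (hg0 : 0 < g) (hg1 : g < 1/4) (m : ℕ) (hm : 1 ≤ m) :
    ENNReal.ofReal (Wseq g m)
      ≤ ∑' l : Fin m → ℕ+, ∏ k : Fin m, ENNReal.ofReal (Tmat g (l k) (l (finRotate m k))) := by
  obtain ⟨n, rfl⟩ : ∃ n, m = n + 1 := ⟨m - 1, by omega⟩
  calc ENNReal.ofReal (Wseq g (n + 1))
      = ∑' a : ℕ+, ENNReal.ofReal (√g ^ (a : ℕ)) *
          kernelPow (transferKernel g) n (fun s => ENNReal.ofReal (√g ^ (s : ℕ))) a :=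
        (tsum_sqrt_pow_mul_kernelPow_transferKernel hg0 hg1 n).symm
    _ = _ := (tsum_path_eq_tsum_kernelPow _ n _ _).symm
    _ ≤ _ := tsum_path_le_tsum_cycle _ n (ofReal_sqrt_pow_mul_le_transferKernel g)
end
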